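/- arXiv:1102.5433 — 8 statements merged into one kernel-verified Lean document; each statement's English description precedes it below -/
import Mathlib

section
/- Let n ≥ 3 and let (P₀, …, P_{k-1}) be a good palindromic partition of {1,…,n} with respect to (t₀,…,t_{k-1}), where each t_i ≥ 2. Then (P₀', …, P_{k-1}'), where P_i' = {v - 1 : v ∈ P_i \ {1, n}}, is a good palindromic partition of {1,…,n-2} with respect to (t₀,…,t_{k-1}). -/
/-- `S` contains an arithmetic progression of length `t` (with `a, d ≥ 1`). -/
def HasAP (S : Set ℕ) (t : ℕ) : Prop :=
  ∃ a d : ℕ, 1 ≤ a ∧ 1 ≤ d ∧ ∀ i < t, a + i * d ∈ S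

/-- `P` is a good partition of `{1,…,n}` w.r.t. progression lengths `t`. -/
def IsGoodPartition (k n : ℕ) (t : Fin k → ℕ) (P : Fin k → Set ℕ) : Prop :=
  (∀ i, P i ⊆ Set.Icc 1 n) ∧
  (∀ v ∈ Set.Icc 1 n, ∃! i, v ∈ P i) ∧
  (∀ i, ¬ HasAP (P i) (t i))

/-- `P` is invariant under the reflection `v ↦ n+1-v`. -/
def IsPalindromic (n : ℕ) {k : ℕ} (P : Fin k → Set ℕ) : Prop :=
  ∀ i, (fun v => n + 1 - v) '' P i = P i

theorem shift_good_palindromic_partition (k n : ℕ) (t : Fin k → ℕ) (P : Fin k → Set ℕ)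
    (hn : 3 ≤ n) (ht : ∀ i, 2 ≤ t i)
    (h : IsGoodPartition k n t P ∧ IsPalindromic n P) :
    IsGoodPartition k (n - 2) t (fun i => (fun v => v - 1) '' (P i \ {1, n})) ∧
      IsPalindromic (n - 2) (fun i => (fun v => v - 1) '' (P i \ {1, n})) := by
  obtain ⟨⟨h1, h2, h3⟩, hp⟩ := h
  have hmem : ∀ i w, w ∈ (fun v => v - 1) '' (P i \ {1, n}) ↔
      (w + 1 ∈ P i ∧ w + 1 ≠ n ∧ 1 ≤ w) := by
    intro i w
    constructor
    · rintro ⟨v, ⟨hv, hv'⟩, rfl⟩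
      dsimp only
      simp only [Set.mem_insert_iff, Set.mem_singleton_iff, not_or] at hv'
      obtain ⟨hv1, hvn⟩ := hv'
      obtain ⟨hvl, hvr⟩ := h1 i hv
      have h2v : 2 ≤ v := by omega
      have : v - 1 + 1 = v := by omega
      refine ⟨by rw [this]; exact hv, by omega, by omega⟩
    · rintro ⟨hw, hwn, hw1⟩
      exact ⟨w + 1, ⟨hw, by simp only [Set.mem_insert_iff, Set.mem_singleton_iff, not_or]; omega⟩,
        by dsimp only; omega⟩
  have hrefl : ∀ i v, v ∈ P i → n + 1 - v ∈ P i := by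
    intro i v hv
    rw [← hp i]
    exact ⟨v, hv, rfl⟩
  refine ⟨⟨?_, ?_, ?_⟩, ?_⟩
  · intro i w hw
    rw [hmem] at hw
    obtain ⟨hw, hwn, hw1⟩ := hw
    obtain ⟨_, hr⟩ := h1 i hw
    exact ⟨hw1, by omega⟩
  · intro v hv
    obtain ⟨hvl, hvr⟩ := hv
    obtain ⟨i, hi, hu⟩ := h2 (v + 1) ⟨by omega, by omega⟩
    refine ⟨i, (hmem i v).2 ⟨hi, by omega, hvl⟩, ?_⟩
    intro j hj
    rw [hmem] at hj
    exact hu j hj.1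
  · intro i hAP
    obtain ⟨a, d, ha, hd, hap⟩ := hAP
    refine h3 i ⟨a + 1, d, by omega, hd, fun j hj => ?_⟩
    have := (hmem i (a + j * d)).1 (hap j hj)
    have : a + j * d + 1 ∈ P i := this.1
    convert this using 1
    ring
  · intro i
    ext w
    constructor
    · rintro ⟨x, hx, rfl⟩
      dsimp only
      rw [hmem] at hx ⊢
      obtain ⟨hx, hxn, hx1⟩ := hx
      obtain ⟨hxl, hxr⟩ := h1 i hx
      have hr := hrefl i (x + 1) hx
      have hxn2 : x + 1 ≤ n - 1 := by omega
      have e1 : n - 2 + 1 - x + 1 = n + 1 - (x + 1) := by omega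
      refine ⟨by rw [e1]; exact hr, by omega, by omega⟩
    · intro hw
      rw [hmem] at hw
      obtain ⟨hw, hwn, hw1⟩ := hw
      obtain ⟨hwl, hwr⟩ := h1 i hw
      refine ⟨n - 2 + 1 - w, ?_, by dsimp only; omega⟩
      rw [hmem]
      have hr := hrefl i (w + 1) hw
      have e1 : n - 2 + 1 - w + 1 = n + 1 - (w + 1) := by omega
      refine ⟨by rw [e1]; exact hr, by omega, by omega⟩
end

section
/- Fix k ≥ 1 and t₀,…,t_{k-1}. If for some n there is no good palindromic partition of {1,…,n} with respect to (t₀,…,t_{k-1}), then for every i ≥ 0 there is no good palindromic partition of {1,…,n + 2i}. -/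
theorem no_palindromic_partition_step_two (k : ℕ) (hk : 1 ≤ k) (t : Fin k → ℕ) (n : ℕ)
    (h : ¬ ∃ P : Fin k → Set ℕ, IsGoodPartition k n t P ∧ IsPalindromic n P) :
    ∀ i : ℕ, ¬ ∃ P : Fin k → Set ℕ,
      IsGoodPartition k (n + 2 * i) t P ∧ IsPalindromic (n + 2 * i) P := by
  have step : ∀ m : ℕ,
      (∃ P : Fin k → Set ℕ, IsGoodPartition k (m + 2) t P ∧ IsPalindromic (m + 2) P) →
      (∃ P : Fin k → Set ℕ, IsGoodPartition k m t P ∧ IsPalindromic m P) := by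
    intro m ⟨P, ⟨hsub, huniq, hap⟩, hpal⟩
    refine ⟨fun i => {v | v ∈ Set.Icc 1 m ∧ v + 1 ∈ P i}, ⟨?_, ?_, ?_⟩, ?_⟩
    · intro i v hv; exact hv.1
    · intro v hv
      simp only [Set.mem_Icc] at hv
      obtain ⟨i, hi, hi'⟩ := huniq (v + 1) (by simp [Set.mem_Icc]; omega)
      refine ⟨i, ⟨by simp [Set.mem_Icc]; omega, hi⟩, fun j hj => hi' j hj.2⟩
    · intro i ⟨a, d, ha, hd, hmem⟩
      exact hap i ⟨a + 1, d, by omega, hd, fun j hj => by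
        have := (hmem j hj).2; convert this using 1; ring⟩
    · intro i
      have key : ∀ v, v ∈ Set.Icc 1 m ∧ v + 1 ∈ P i →
          (m + 1 - v) ∈ Set.Icc 1 m ∧ (m + 1 - v) + 1 ∈ P i := by
        intro v ⟨hv, hvp⟩
        simp only [Set.mem_Icc] at hv ⊢
        constructor
        · omega
        · have : (m + 2) + 1 - (v + 1) ∈ P i := by
            have := hpal i
            rw [← this]
            exact ⟨v + 1, hvp, rfl⟩
          have heq : (m + 2) + 1 - (v + 1) = (m + 1 - v) + 1 := by omega
          rwa [heq] at this
      ext v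
      constructor
      · rintro ⟨w, hw, rfl⟩
        exact key w hw
      · intro hv
        refine ⟨m + 1 - v, key v hv, ?_⟩
        have := hv.1
        simp only [Set.mem_Icc] at this
        show m + 1 - (m + 1 - v) = v
        omega
  intro i
  induction i with
  | zero => simpa using h
  | succ j ih =>
    intro hP
    exact ih (step (n + 2 * j) (by convert hP using 3 <;> ring))
end

section
/- The van der Waerden number w(2; 3, 4) equals 18; that is, every partition of {1,…,18} into two blocks P₀, P₁ either has an arithmetic progression of length 3 in P₀ or one of length 4 in P₁, and some partition of {1,…,17} avoids both. -/
/-- Does the bit-string `m` (position `k ≥ 1` has value `m.testBit (k-1)`) contain a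
false-AP of length 3 or a true-AP of length 4 ending exactly at position `p`? -/
def apEnd (m p : ℕ) : Bool :=
  ((List.range 9).any fun d =>
      decide (1 ≤ d ∧ 2*d < p) && ((List.range 3).all fun i => !m.testBit (p - i*d - 1))) ||
  ((List.range 6).any fun d =>
      decide (1 ≤ d ∧ 3*d < p) && ((List.range 4).all fun i => m.testBit (p - i*d - 1)))

/-- DFS with pruning. -/
def srch : ℕ → ℕ → ℕ → Bool
  | 0, _, _ => false
  | fuel+1, n, m =>
      (apEnd m (n+1) || srch fuel (n+1) m) &&
      (apEnd (2^n + m) (n+1) || srch fuel (n+1) (2^n + m))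

theorem srch_root : srch 18 0 0 = true := by decide

theorem apEnd_sound (m p : ℕ) (c : ℕ → Bool) (hp : p ≤ 18)
    (hagree : ∀ k, 1 ≤ k → k ≤ p → c k = m.testBit (k-1))
    (hend : apEnd m p = true) :
    (∃ a d : ℕ, 1 ≤ a ∧ 1 ≤ d ∧ a + 2 * d ≤ 18 ∧ ∀ i < 3, c (a + i * d) = false) ∨
    (∃ a d : ℕ, 1 ≤ a ∧ 1 ≤ d ∧ a + 3 * d ≤ 18 ∧ ∀ i < 4, c (a + i * d) = true) := by
  simp only [apEnd, Bool.or_eq_true, List.any_eq_true, List.mem_range, Bool.and_eq_true,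
    decide_eq_true_eq, List.all_eq_true, Bool.not_eq_true'] at hend
  rcases hend with ⟨d, _, ⟨hd1, hdp⟩, hbits⟩ | ⟨d, _, ⟨hd1, hdp⟩, hbits⟩
  · left
    refine ⟨p - 2*d, d, by omega, hd1, by omega, ?_⟩
    intro i hi
    have hq : p - 2*d + i*d = p - (2-i)*d := by
      interval_cases i <;> omega
    rw [hq]
    have := hbits (2-i) (by omega)
    have hub : (2-i)*d ≤ 2*d := Nat.mul_le_mul_right d (by omega)
    rw [hagree _ (by omega) (by omega)]
    exact this
  · right
    refine ⟨p - 3*d, d, by omega, hd1, by omega, ?_⟩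
    intro i hi
    have hq : p - 3*d + i*d = p - (3-i)*d := by
      interval_cases i <;> omega
    rw [hq]
    have := hbits (3-i) (by omega)
    have hub : (3-i)*d ≤ 3*d := Nat.mul_le_mul_right d (by omega)
    rw [hagree _ (by omega) (by omega)]
    exact this

theorem srch_sound : ∀ fuel n m, n + fuel = 18 → m < 2^n → srch fuel n m = true →
    ∀ c : ℕ → Bool, (∀ k, 1 ≤ k → k ≤ n → c k = m.testBit (k-1)) →
    (∃ a d : ℕ, 1 ≤ a ∧ 1 ≤ d ∧ a + 2 * d ≤ 18 ∧ ∀ i < 3, c (a + i * d) = false) ∨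
    (∃ a d : ℕ, 1 ≤ a ∧ 1 ≤ d ∧ a + 3 * d ≤ 18 ∧ ∀ i < 4, c (a + i * d) = true) := by
  intro fuel
  induction fuel with
  | zero => intro n m _ _ h; simp [srch] at h
  | succ fuel ih =>
    intro n m hn hm hs c hc
    have hn' : n ≤ 17 := by omega
    simp only [srch, Bool.and_eq_true, Bool.or_eq_true] at hs
    obtain ⟨m2, hbranch, hm2lt, hbit, hlow⟩ :
        ∃ m2, (apEnd m2 (n+1) = true ∨ srch fuel (n+1) m2 = true) ∧ m2 < 2^(n+1) ∧
          m2.testBit n = c (n+1) ∧ ∀ j < n, m2.testBit j = m.testBit j := by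
      have hpow : (2:ℕ)^(n+1) = 2^n + 2^n := by ring
      cases hcb : c (n+1) with
      | false =>
        exact ⟨m, hs.1, by omega, by rw [Nat.testBit_lt_two_pow hm], fun j _ => rfl⟩
      | true =>
        refine ⟨2^n + m, hs.2, by omega, ?_, fun j hj => Nat.testBit_two_pow_add_gt hj m⟩
        rw [Nat.testBit_two_pow_add_eq, Nat.testBit_lt_two_pow hm]
        rfl
    have hagree : ∀ k, 1 ≤ k → k ≤ n+1 → c k = m2.testBit (k-1) := by
      intro k h1k hk
      rcases Nat.lt_or_ge k (n+1) with hlt | hge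
      · rw [hlow (k-1) (by omega)]; exact hc k h1k (by omega)
      · have hk1 : k = n + 1 := by omega
        subst hk1
        simp only [Nat.add_sub_cancel]
        exact hbit.symm
    rcases hbranch with hend | hrec
    · exact apEnd_sound m2 (n+1) c (by omega) hagree hend
    · exact ih (n+1) m2 (by omega) hm2lt hrec c hagree

def c17 : ℕ → Bool := fun k => k ∈ [1,2,3,5,8,9,10,12,15,16,17]

theorem vdw_2_3_4_eq_18 :
    (∀ c : ℕ → Bool,
      (∃ a d : ℕ, 1 ≤ a ∧ 1 ≤ d ∧ a + 2 * d ≤ 18 ∧ ∀ i < 3, c (a + i * d) = false) ∨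
      (∃ a d : ℕ, 1 ≤ a ∧ 1 ≤ d ∧ a + 3 * d ≤ 18 ∧ ∀ i < 4, c (a + i * d) = true)) ∧
    (∃ c : ℕ → Bool,
      ¬ ((∃ a d : ℕ, 1 ≤ a ∧ 1 ≤ d ∧ a + 2 * d ≤ 17 ∧ ∀ i < 3, c (a + i * d) = false) ∨
         (∃ a d : ℕ, 1 ≤ a ∧ 1 ≤ d ∧ a + 3 * d ≤ 17 ∧ ∀ i < 4, c (a + i * d) = true))) := by
  constructor
  · intro c
    exact srch_sound 18 0 0 rfl (by norm_num) srch_root c (by omega)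
  · refine ⟨c17, ?_⟩
    intro h
    have hb : (∃ a < 17, ∃ d < 9, 1 ≤ a ∧ 1 ≤ d ∧ a + 2*d ≤ 17 ∧ ∀ i < 3, c17 (a+i*d) = false) ∨
              (∃ a < 17, ∃ d < 6, 1 ≤ a ∧ 1 ≤ d ∧ a + 3*d ≤ 17 ∧ ∀ i < 4, c17 (a+i*d) = true) := by
      rcases h with ⟨a, d, h1, h2, h3, h4⟩ | ⟨a, d, h1, h2, h3, h4⟩
      · exact Or.inl ⟨a, by omega, d, by omega, h1, h2, h3, h4⟩
      · exact Or.inr ⟨a, by omega, d, by omega, h1, h2, h3, h4⟩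
    revert hb
    decide
end

section
/- There exists a partition of {1,…,21} into two blocks P₀, P₁ such that P₀ contains no arithmetic progression of length 3 and P₁ contains no arithmetic progression of length 5; hence w(2; 3, 5) ≥ 22. -/
open Combinatorics Finset

/-- A bounded monochromatic-AP version of van der Waerden, from Hales–Jewett. -/
lemma exists_bounded_mono_ap : ∃ N : ℕ, ∀ C : ℕ → Bool, ∃ a b : ℕ, 1 ≤ a ∧
    (∀ k < 5, a + b + k * a ≤ N) ∧ ∃ c, ∀ k < 5, C (a + b + k * a) = c := by
  classical
  obtain ⟨ι, _inst, hι⟩ := Line.exists_mono_in_high_dimension (Fin 5) Bool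
  refine ⟨5 * Fintype.card ι, fun C => ?_⟩
  obtain ⟨l, c, hl⟩ := hι fun v => C (∑ i, ((v i : ℕ) + 1))
  set s : Finset ι := Finset.univ.filter fun i => l.idxFun i = none with hs
  set b : ℕ := ∑ i ∈ sᶜ, (((l.idxFun i).map Fin.val).getD 0 + 1) with hb
  have hsum : ∀ x : Fin 5, (∑ i, ((l x i : ℕ) + 1)) = s.card + b + (x : ℕ) * s.card := by
    intro x
    rw [← Finset.sum_add_sum_compl s]
    have h1 : ∑ i ∈ s, ((l x i : ℕ) + 1) = s.card * ((x : ℕ) + 1) := by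
      rw [Finset.sum_congr rfl (fun i hi => ?_), Finset.sum_const, smul_eq_mul]
      rw [hs, Finset.mem_filter] at hi
      rw [Line.coe_apply, hi.2]
      rfl
    have h2 : ∑ i ∈ sᶜ, ((l x i : ℕ) + 1) = b := by
      rw [hb]
      refine Finset.sum_congr rfl (fun i hi => ?_)
      rw [Finset.mem_compl, hs, Finset.mem_filter] at hi
      obtain ⟨y, hy⟩ := Option.ne_none_iff_exists'.mp (fun h => hi ⟨Finset.mem_univ _, h⟩)
      rw [Line.coe_apply, hy]
      rfl
    rw [h1, h2]; ring
  have hcard : 1 ≤ s.card := by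
    obtain ⟨i, hi⟩ := l.proper
    exact Finset.card_pos.mpr ⟨i, by rw [hs, Finset.mem_filter]; exact ⟨Finset.mem_univ _, hi⟩⟩
  refine ⟨s.card, b, hcard, fun k hk => ?_, c, fun k hk => ?_⟩
  · have hvk : ((⟨k, hk⟩ : Fin 5) : ℕ) = k := rfl
    have h := hsum ⟨k, hk⟩
    rw [hvk] at h
    have hle : (∑ i, ((l (⟨k, hk⟩ : Fin 5) i : ℕ) + 1)) ≤ 5 * Fintype.card ι := by
      calc (∑ i, ((l (⟨k, hk⟩ : Fin 5) i : ℕ) + 1)) ≤ ∑ _i : ι, 5 :=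
            Finset.sum_le_sum (fun i _ => Nat.succ_le_of_lt (Fin.is_lt _))
        _ = 5 * Fintype.card ι := by
            rw [Finset.sum_const, smul_eq_mul, Finset.card_univ, mul_comm]
    omega
  · have hvk : ((⟨k, hk⟩ : Fin 5) : ℕ) = k := rfl
    have h := hl ⟨k, hk⟩
    simp only at h
    rw [hsum ⟨k, hk⟩, hvk] at h
    exact h

/-- The good set for the certificate partition. -/
def goodP0 : Set ℕ := {x | x = 1 ∨ x = 2 ∨ x = 6 ∨ x = 7 ∨ x = 9 ∨ x = 14 ∨ x = 15 ∨ x = 18 ∨ x = 20}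

lemma goodP0_no3 : ¬ HasAP goodP0 3 := by
  rintro ⟨a, d, ha, hd, h⟩
  have h0 := h 0 (by norm_num)
  have h1 := h 1 (by norm_num)
  have h2 := h 2 (by norm_num)
  simp only [goodP0, Set.mem_setOf_eq] at h0 h1 h2
  omega

lemma goodP1_no5 : ¬ HasAP (Set.Icc 1 21 \ goodP0) 5 := by
  rintro ⟨a, d, ha, hd, h⟩
  have h0 := h 0 (by norm_num)
  have h1 := h 1 (by norm_num)
  have h2 := h 2 (by norm_num)
  have h3 := h 3 (by norm_num)
  have h4 := h 4 (by norm_num)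
  simp only [goodP0, Set.mem_diff, Set.mem_Icc, Set.mem_setOf_eq, not_or] at h0 h1 h2 h3 h4
  omega

theorem vdw_2_3_5_lower_bound :
    (∃ P0 P1 : Set ℕ, P0 ∪ P1 = Set.Icc 1 21 ∧ Disjoint P0 P1 ∧
      ¬ HasAP P0 3 ∧ ¬ HasAP P1 5) ∧
    22 ≤ sInf {n : ℕ | ∀ P0 P1 : Set ℕ,
      P0 ∪ P1 = Set.Icc 1 n → Disjoint P0 P1 → HasAP P0 3 ∨ HasAP P1 5} := by
  classical
  have cert : ∀ m : ℕ, m ≤ 21 → ∃ P0 P1 : Set ℕ, P0 ∪ P1 = Set.Icc 1 m ∧ Disjoint P0 P1 ∧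
      ¬ HasAP P0 3 ∧ ¬ HasAP P1 5 := by
    intro m hm
    refine ⟨goodP0 ∩ Set.Icc 1 m, (Set.Icc 1 21 \ goodP0) ∩ Set.Icc 1 m, ?_, ?_, ?_, ?_⟩
    · ext x
      simp only [goodP0, Set.mem_union, Set.mem_inter_iff, Set.mem_diff, Set.mem_Icc,
        Set.mem_setOf_eq, not_or]
      omega
    · refine Set.disjoint_left.mpr fun x hx hx' => ?_
      exact hx'.1.2 hx.1
    · rintro ⟨a, d, ha, hd, h⟩
      exact goodP0_no3 ⟨a, d, ha, hd, fun i hi => (h i hi).1⟩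
    · rintro ⟨a, d, ha, hd, h⟩
      exact goodP1_no5 ⟨a, d, ha, hd, fun i hi => (h i hi).1⟩
  obtain ⟨N, hN⟩ := exists_bounded_mono_ap
  set S := {n : ℕ | ∀ P0 P1 : Set ℕ,
      P0 ∪ P1 = Set.Icc 1 n → Disjoint P0 P1 → HasAP P0 3 ∨ HasAP P1 5} with hS
  have hMem : max N 22 ∈ S := by
    intro P0 P1 hunion hdisj
    obtain ⟨a, b, ha, hbd, c, hc⟩ := hN fun x => decide (x ∈ P1)
    have hmem : ∀ k < 5, a + b + k * a ∈ Set.Icc 1 (max N 22) := by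
      intro k hk
      have := hbd k hk
      simp only [Set.mem_Icc]
      omega
    cases c with
    | false =>
      refine Or.inl ⟨a + b, a, by omega, ha, fun i hi => ?_⟩
      have hi5 : i < 5 := by omega
      have h1 := hc i hi5
      have h2 := hmem i hi5
      rw [← hunion] at h2
      simp only [decide_eq_false_iff_not] at h1
      have : a + b + i * a ∈ P0 ∪ P1 := h2
      rcases this with h | h
      · exact h
      · exact absurd h h1
    | true =>
      refine Or.inr ⟨a + b, a, by omega, ha, fun i hi => ?_⟩
      have h1 := hc i hi
      simp only [decide_eq_true_eq] at h1
      exact h1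
  have hne : S.Nonempty := ⟨_, hMem⟩
  refine ⟨cert 21 le_rfl, ?_⟩
  by_contra hlt
  push_neg at hlt
  have hmemS : sInf S ∈ S := Nat.sInf_mem hne
  have hle21 : sInf S ≤ 21 := by omega
  obtain ⟨P0, P1, hu, hd, h3, h5⟩ := cert (sInf S) hle21
  rcases hmemS P0 P1 hu hd with h | h
  · exact h3 h
  · exact h5 h
end

section
/- Let p be the largest p ≥ 0 such that for all 1 ≤ n ≤ p a good palindromic partition of {1,…,n} w.r.t. (t₀,…,t_{k-1}) exists, and q the smallest q ≥ 1 such that for all n ≥ q no good palindromic partition exists (both exist assuming van der Waerden's theorem). Then q - p is odd, and no good palindromic partition exists for n = p+1. -/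
/-- There exists a good palindromic partition of `{1,…,n}`. -/
def GPPExists (k : ℕ) (t : Fin k → ℕ) (n : ℕ) : Prop :=
  ∃ P : Fin k → Set ℕ, IsGoodPartition k n t P ∧ IsPalindromic n P

lemma gpp_step (k : ℕ) (t : Fin k → ℕ) (n : ℕ) (hn : 1 ≤ n)
    (h : GPPExists k t (n + 2)) : GPPExists k t n := by
  obtain ⟨P, ⟨hsub, huniq, hap⟩, hpal⟩ := h
  have hrefl : ∀ i v, v ∈ P i → n + 2 + 1 - v ∈ P i := by
    intro i v hv
    rw [← hpal i]
    exact ⟨v, hv, rfl⟩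
  refine ⟨fun i => {v | 1 ≤ v ∧ v ≤ n ∧ v + 1 ∈ P i}, ⟨?_, ?_, ?_⟩, ?_⟩
  · intro i v hv; exact ⟨hv.1, hv.2.1⟩
  · intro v hv
    simp only [Set.mem_Icc] at hv
    obtain ⟨i, hi, hu⟩ := huniq (v + 1) (by simp only [Set.mem_Icc]; omega)
    exact ⟨i, ⟨hv.1, hv.2, hi⟩, fun j hj => hu j hj.2.2⟩
  · rintro i ⟨a, d, ha, hd, hmem⟩
    refine hap i ⟨a + 1, d, by omega, hd, fun j hj => ?_⟩
    have := (hmem j hj).2.2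
    have he : a + 1 + j * d = a + j * d + 1 := by ring
    rw [he]
    exact this
  · intro i
    ext v
    constructor
    · rintro ⟨w, ⟨hw1, hw2, hwP⟩, rfl⟩
      show 1 ≤ n + 1 - w ∧ n + 1 - w ≤ n ∧ (n + 1 - w) + 1 ∈ P i
      refine ⟨by omega, by omega, ?_⟩
      have := hrefl i (w + 1) hwP
      have he : n + 2 + 1 - (w + 1) = n + 1 - w + 1 := by omega
      rwa [he] at this
    · rintro ⟨hv1, hv2, hvP⟩
      refine ⟨n + 1 - v, ⟨by omega, by omega, ?_⟩, by simp; omega⟩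
      have := hrefl i (v + 1) hvP
      have he : n + 2 + 1 - (v + 1) = n + 1 - v + 1 := by omega
      rwa [he] at this

lemma gpp_stepIter (k : ℕ) (t : Fin k → ℕ) (m n : ℕ) (hn : 1 ≤ n)
    (h : GPPExists k t (n + 2 * m)) : GPPExists k t n := by
  induction m with
  | zero => simpa using h
  | succ m ih =>
    refine ih (gpp_step k t (n + 2 * m) (by omega) ?_)
    rwa [show n + 2 * (m + 1) = n + 2 * m + 2 from by ring] at h

theorem palindromic_span_odd (k : ℕ) (t : Fin k → ℕ) (p q : ℕ) (hq1 : 1 ≤ q)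
    (hN : ∃ N : ℕ, ∀ n ≥ N, ¬ GPPExists k t n)
    (hp : ∀ n, 1 ≤ n → n ≤ p → GPPExists k t n)
    (hpmax : ∀ p' : ℕ, (∀ n, 1 ≤ n → n ≤ p' → GPPExists k t n) → p' ≤ p)
    (hq : ∀ n ≥ q, ¬ GPPExists k t n)
    (hqmin : ∀ q' : ℕ, 1 ≤ q' → (∀ n ≥ q', ¬ GPPExists k t n) → q ≤ q') :
    Odd (q - p) ∧ ¬ GPPExists k t (p + 1) := by
  have hnp1 : ¬ GPPExists k t (p + 1) := by
    intro h
    have : p + 1 ≤ p := by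
      apply hpmax
      intro n h1 h2
      rcases Nat.lt_or_ge n (p + 1) with h' | h'
      · exact hp n h1 (by omega)
      · have : n = p + 1 := by omega
        subst this; exact h
    omega
  have hqp : p + 1 ≤ q := by
    by_contra hc
    push_neg at hc
    have hp1 : 1 ≤ p := by omega
    exact hq p (by omega) (hp p hp1 le_rfl)
  refine ⟨?_, hnp1⟩
  rw [Nat.not_even_iff_odd.symm]
  intro heven
  have hq2 : p + 2 ≤ q := by
    rcases heven with ⟨r, hr⟩
    omega
  -- GPP exists at q - 1
  have hgq1 : GPPExists k t (q - 1) := by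
    by_contra hc
    have : q ≤ q - 1 := by
      apply hqmin (q - 1) (by omega)
      intro n hn
      rcases Nat.lt_or_ge n q with h' | h'
      · have : n = q - 1 := by omega
        subst this; exact hc
      · exact hq n h'
    omega
  obtain ⟨r, hr⟩ := heven
  have hm : q - 1 = (p + 1) + 2 * ((q - p - 2) / 2) := by omega
  exact hnp1 (gpp_stepIter k t ((q - p - 2) / 2) (p + 1) (by omega) (by rwa [hm] at hgq1))
end

section
/- For t ∈ ℕ and n ≥ 0, the hypergraph pdap(t,n) is embedded into pdap(t,n+2) via the map v ↦ v+1; that is, this map is injective on vertices, and a set H ⊆ {1,…,⌈n/2⌉} is a hyperedge of pdap(t,n) if and only if {v+1 : v ∈ H} is a hyperedge of pdap(t,n+2). -/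
/-- Hyperedges of the hypergraph of arithmetic progressions of length `t` in `{1,…,n}`. -/
def apEdges (t n : ℕ) : Set (Set ℕ) :=
  {S | ∃ a d : ℕ, 1 ≤ a ∧ 1 ≤ d ∧ S = {x | ∃ i < t, x = a + i * d} ∧ S ⊆ Set.Icc 1 n}

/-- The folding map `m'_n : {1,…,n} → {1,…,⌈n/2⌉}`, `v ↦ min(v, n+1-v)`. -/
def mfold (n v : ℕ) : ℕ := if v ≤ (n + 1) / 2 then v else n + 1 - v

/-- Hyperedges of the palindromic hypergraph `pdap(t,n)`: the ⊆-minimal images of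
arithmetic progressions under the folding map. -/
def pdapEdges (t n : ℕ) : Set (Set ℕ) :=
  {E | (∃ S ∈ apEdges t n, E = mfold n '' S) ∧
       ∀ S ∈ apEdges t n, mfold n '' S ⊆ E → mfold n '' S = E}

lemma shift_inj : Function.Injective (fun v : ℕ => v + 1) := fun a b h => by simpa using h

lemma mfold_succ (n v : ℕ) (hv : v ≤ n + 1) : mfold (n + 2) (v + 1) = mfold n v + 1 := by
  unfold mfold; split_ifs <;> omega

lemma ap_subset {t n : ℕ} {S : Set ℕ} (h : S ∈ apEdges t n) : S ⊆ Set.Icc 1 n := by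
  obtain ⟨a, d, _, _, _, hsub⟩ := h; exact hsub

lemma image_shift_mfold (n : ℕ) (S : Set ℕ) (hS : S ⊆ Set.Icc 1 n) :
    mfold (n + 2) '' ((fun v : ℕ => v + 1) '' S) = (fun v : ℕ => v + 1) '' (mfold n '' S) := by
  rw [← Set.image_comp, ← Set.image_comp]
  apply Set.image_congr
  intro v hv
  have := (hS hv).2
  simp only [Function.comp_apply]
  exact mfold_succ n v (by omega)

lemma shift_mem_ap {t n : ℕ} {S : Set ℕ} (h : S ∈ apEdges t n) :
    (fun v : ℕ => v + 1) '' S ∈ apEdges t (n + 2) := by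
  obtain ⟨a, d, ha, hd, hs, hsub⟩ := h
  refine ⟨a + 1, d, by omega, hd, ?_, ?_⟩
  · subst hs
    ext x
    simp only [Set.mem_image, Set.mem_setOf_eq]
    constructor
    · rintro ⟨v, ⟨i, hi, rfl⟩, rfl⟩; exact ⟨i, hi, by omega⟩
    · rintro ⟨i, hi, rfl⟩; exact ⟨a + i * d, ⟨i, hi, rfl⟩, by omega⟩
  · rintro x ⟨v, hv, rfl⟩
    have := hsub hv
    simp only [Set.mem_Icc] at *
    omega

lemma unshift_ap {t n : ℕ} {S' : Set ℕ} (h : S' ∈ apEdges t (n + 2))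
    (hsub : S' ⊆ Set.Icc 2 (n + 1)) : ∃ S ∈ apEdges t n, S' = (fun v : ℕ => v + 1) '' S := by
  obtain ⟨a, d, ha, hd, hs, _⟩ := h
  rcases Nat.eq_zero_or_pos t with ht | ht
  · refine ⟨∅, ⟨1, 1, le_refl 1, le_refl 1, ?_, by simp⟩, ?_⟩
    · ext x; simp [ht]
    · subst hs; ext x; simp [ht]
  · have ha2 : 2 ≤ a := by
      have : a ∈ S' := by rw [hs]; exact ⟨0, ht, by omega⟩
      exact (hsub this).1
    refine ⟨{x | ∃ i < t, x = (a - 1) + i * d}, ⟨a - 1, d, by omega, hd, rfl, ?_⟩, ?_⟩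
    · rintro x ⟨i, hi, rfl⟩
      have : a + i * d ∈ S' := by rw [hs]; exact ⟨i, hi, rfl⟩
      have := hsub this
      simp only [Set.mem_Icc] at *
      omega
    · subst hs
      ext x
      simp only [Set.mem_image, Set.mem_setOf_eq]
      constructor
      · rintro ⟨i, hi, rfl⟩; exact ⟨a - 1 + i * d, ⟨i, hi, rfl⟩, by omega⟩
      · rintro ⟨v, ⟨i, hi, rfl⟩, rfl⟩; exact ⟨i, hi, by omega⟩

lemma mfold_ge_two {n x : ℕ} (hx : x ∈ Set.Icc 1 (n + 2)) (h2 : 2 ≤ mfold (n + 2) x) :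
    x ∈ Set.Icc 2 (n + 1) := by
  simp only [Set.mem_Icc] at *
  unfold mfold at h2
  split_ifs at h2 <;> omega

theorem pdap_embedding (t n : ℕ) (H : Set ℕ) (hH : H ⊆ Set.Icc 1 ((n + 1) / 2)) :
    Function.Injective (fun v : ℕ => v + 1) ∧
    (H ∈ pdapEdges t n ↔ (fun v : ℕ => v + 1) '' H ∈ pdapEdges t (n + 2)) := by
  have hinj := shift_inj
  have himg := Set.image_injective.mpr hinj
  refine ⟨hinj, ?_, ?_⟩
  · -- forward
    rintro ⟨⟨S, hS, rfl⟩, hmin⟩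
    refine ⟨⟨_, shift_mem_ap hS, (image_shift_mfold n S (ap_subset hS)).symm⟩, ?_⟩
    intro S' hS' hsub'
    have hS'sub : S' ⊆ Set.Icc 2 (n + 1) := by
      intro x hx
      refine mfold_ge_two (ap_subset hS' hx) ?_
      have : mfold (n + 2) x ∈ (fun v : ℕ => v + 1) '' (mfold n '' S) :=
        hsub' ⟨x, hx, rfl⟩
      obtain ⟨v, hv, hveq⟩ := this
      have hveq' : v + 1 = mfold (n + 2) x := hveq
      have := (hH hv).1
      omega
    obtain ⟨S₀, hS₀, rfl⟩ := unshift_ap hS' hS'sub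
    rw [image_shift_mfold n S₀ (ap_subset hS₀)] at hsub' ⊢
    rw [hmin S₀ hS₀ (fun x hx => by
      have := hsub' (Set.mem_image_of_mem _ hx)
      obtain ⟨v, hv, hveq⟩ := this
      have hveq' : v + 1 = x + 1 := hveq
      have : v = x := by omega
      rwa [← this])]
  · -- backward
    rintro ⟨⟨S', hS', hE⟩, hmin⟩
    have hS'sub : S' ⊆ Set.Icc 2 (n + 1) := by
      intro x hx
      refine mfold_ge_two (ap_subset hS' hx) ?_
      have : mfold (n + 2) x ∈ (fun v : ℕ => v + 1) '' H := by
        rw [hE]; exact ⟨x, hx, rfl⟩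
      obtain ⟨v, hv, hveq⟩ := this
      have hveq' : v + 1 = mfold (n + 2) x := hveq
      have := (hH hv).1
      omega
    obtain ⟨S, hS, rfl⟩ := unshift_ap hS' hS'sub
    rw [image_shift_mfold n S (ap_subset hS)] at hE
    have hHS : H = mfold n '' S := himg hE
    refine ⟨⟨S, hS, hHS⟩, ?_⟩
    intro S₀ hS₀ hsub
    apply himg
    rw [← image_shift_mfold n S₀ (ap_subset hS₀)]
    exact hmin _ (shift_mem_ap hS₀)
      (by rw [image_shift_mfold n S₀ (ap_subset hS₀)]; exact Set.image_mono hsub)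
end

section
/- For t₀, t₁ ∈ ℕ and n ≥ 0, there exists a good palindromic partition of {1,…,n} with respect to (t₀,t₁) if and only if there exists an assignment f : {1,…,⌈n/2⌉} → {0,1} such that every hyperedge of pdap(t₀,n) contains a vertex with f-value 1 and every hyperedge of pdap(t₁,n) contains a vertex with f-value 0. -/
lemma apEdges_finite {t n : ℕ} {S : Set ℕ} (hS : S ∈ apEdges t n) : S.Finite := by
  obtain ⟨a, d, _, _, _, hsub⟩ := hS
  exact (Set.finite_Icc 1 n).subset hsub

lemma exists_min_edge (t n : ℕ) {S : Set ℕ} (hS : S ∈ apEdges t n) :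
    ∃ E ∈ pdapEdges t n, E ⊆ mfold n '' S := by
  classical
  set T : Set (Set ℕ) :=
    {E | (∃ S' ∈ apEdges t n, E = mfold n '' S') ∧ E ⊆ mfold n '' S} with hT
  have hTne : mfold n '' S ∈ T := ⟨⟨S, hS, rfl⟩, subset_rfl⟩
  have hNne : (Set.ncard '' T).Nonempty := ⟨_, _, hTne, rfl⟩
  obtain ⟨k, hk, hmin⟩ := (Nat.lt_wfRel.wf).has_min _ hNne
  obtain ⟨E, hET, hEk⟩ := hk
  obtain ⟨⟨S0, hS0, hES0⟩, hEsub⟩ := hET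
  have hEfin : E.Finite := hES0 ▸ (apEdges_finite hS0).image _
  refine ⟨E, ⟨⟨S0, hS0, hES0⟩, ?_⟩, hEsub⟩
  intro S' hS' hsub
  have hT' : mfold n '' S' ∈ T := ⟨⟨S', hS', rfl⟩, hsub.trans hEsub⟩
  have hle : ¬ (mfold n '' S').ncard < k := hmin _ ⟨_, hT', rfl⟩
  exact Set.eq_of_subset_of_ncard_le hsub (by omega) hEfin

lemma mfold_mem {n : ℕ} {P : Set ℕ} (hpal : (fun v => n + 1 - v) '' P = P)
    {x : ℕ} (hx : x ∈ P) : mfold n x ∈ P := by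
  unfold mfold
  split_ifs
  · exact hx
  · rw [← hpal]; exact ⟨x, hx, rfl⟩

lemma mfold_flip {n v : ℕ} (h1 : 1 ≤ v) (h2 : v ≤ n) :
    mfold n (n + 1 - v) = mfold n v := by
  unfold mfold
  split_ifs <;> omega

theorem pdap_sat_characterisation (t0 t1 n : ℕ) :
    (∃ P0 P1 : Set ℕ, P0 ∪ P1 = Set.Icc 1 n ∧ Disjoint P0 P1 ∧
       (fun v => n + 1 - v) '' P0 = P0 ∧ (fun v => n + 1 - v) '' P1 = P1 ∧
       ¬ HasAP P0 t0 ∧ ¬ HasAP P1 t1) ↔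
    (∃ f : ℕ → Bool,
       (∀ E ∈ pdapEdges t0 n, ∃ v ∈ E, f v = true) ∧
       (∀ E ∈ pdapEdges t1 n, ∃ v ∈ E, f v = false)) := by
  classical
  constructor
  · rintro ⟨P0, P1, hunion, hdisj, hpal0, hpal1, hA0, hA1⟩
    refine ⟨fun v => decide (v ∈ P1), ?_, ?_⟩
    · rintro E ⟨⟨S, ⟨a, d, ha, hd, hSdef, hsub⟩, hE⟩, -⟩
      have : ∃ i < t0, a + i * d ∈ P1 := by
        by_contra h
        push_neg at h
        refine hA0 ⟨a, d, ha, hd, fun i hi => ?_⟩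
        have hxS : a + i * d ∈ S := hSdef ▸ ⟨i, hi, rfl⟩
        have := hsub hxS
        rw [← hunion] at this
        rcases this with h0 | h1
        · exact h0
        · exact absurd h1 (h i hi)
      obtain ⟨i, hi, hmem⟩ := this
      refine ⟨mfold n (a + i * d), hE ▸ ⟨a + i * d, hSdef ▸ ⟨i, hi, rfl⟩, rfl⟩, ?_⟩
      simp [mfold_mem hpal1 hmem]
    · rintro E ⟨⟨S, ⟨a, d, ha, hd, hSdef, hsub⟩, hE⟩, -⟩
      have : ∃ i < t1, a + i * d ∈ P0 := by
        by_contra h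
        push_neg at h
        refine hA1 ⟨a, d, ha, hd, fun i hi => ?_⟩
        have hxS : a + i * d ∈ S := hSdef ▸ ⟨i, hi, rfl⟩
        have := hsub hxS
        rw [← hunion] at this
        rcases this with h0 | h1
        · exact absurd h0 (h i hi)
        · exact h1
      obtain ⟨i, hi, hmem⟩ := this
      refine ⟨mfold n (a + i * d), hE ▸ ⟨a + i * d, hSdef ▸ ⟨i, hi, rfl⟩, rfl⟩, ?_⟩
      have := mfold_mem hpal0 hmem
      simp [Set.disjoint_left.mp hdisj this]
  · rintro ⟨f, h0, h1⟩
    refine ⟨{v | v ∈ Set.Icc 1 n ∧ f (mfold n v) = false},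
            {v | v ∈ Set.Icc 1 n ∧ f (mfold n v) = true}, ?_, ?_, ?_, ?_, ?_, ?_⟩
    · ext v
      simp only [Set.mem_union, Set.mem_setOf_eq]
      cases hfv : f (mfold n v) <;> simp [hfv]
    · rw [Set.disjoint_left]
      rintro v ⟨-, hv⟩ ⟨-, hv'⟩
      simp [hv] at hv'
    · ext x
      simp only [Set.mem_image, Set.mem_setOf_eq, Set.mem_Icc]
      constructor
      · rintro ⟨v, ⟨⟨hv1, hv2⟩, hfv⟩, rfl⟩
        refine ⟨by omega, ?_⟩
        rwa [mfold_flip hv1 hv2]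
      · rintro ⟨⟨hx1, hx2⟩, hfx⟩
        refine ⟨n + 1 - x, ⟨⟨by omega, by omega⟩, ?_⟩, by omega⟩
        rwa [mfold_flip hx1 hx2]
    · ext x
      simp only [Set.mem_image, Set.mem_setOf_eq, Set.mem_Icc]
      constructor
      · rintro ⟨v, ⟨⟨hv1, hv2⟩, hfv⟩, rfl⟩
        refine ⟨by omega, ?_⟩
        rwa [mfold_flip hv1 hv2]
      · rintro ⟨⟨hx1, hx2⟩, hfx⟩
        refine ⟨n + 1 - x, ⟨⟨by omega, by omega⟩, ?_⟩, by omega⟩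
        rwa [mfold_flip hx1 hx2]
    · rintro ⟨a, d, ha, hd, hall⟩
      have hS : {x | ∃ i < t0, x = a + i * d} ∈ apEdges t0 n := by
        refine ⟨a, d, ha, hd, rfl, ?_⟩
        rintro x ⟨i, hi, rfl⟩
        exact (hall i hi).1
      obtain ⟨E, hE, hEsub⟩ := exists_min_edge t0 n hS
      obtain ⟨v, hvE, hfv⟩ := h0 E hE
      obtain ⟨x, ⟨i, hi, rfl⟩, rfl⟩ := hEsub hvE
      rw [(hall i hi).2] at hfv
      simp at hfv
    · rintro ⟨a, d, ha, hd, hall⟩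
      have hS : {x | ∃ i < t1, x = a + i * d} ∈ apEdges t1 n := by
        refine ⟨a, d, ha, hd, rfl, ?_⟩
        rintro x ⟨i, hi, rfl⟩
        exact (hall i hi).1
      obtain ⟨E, hE, hEsub⟩ := exists_min_edge t1 n hS
      obtain ⟨v, hvE, hfv⟩ := h1 E hE
      obtain ⟨x, ⟨i, hi, rfl⟩, rfl⟩ := hEsub hvE
      rw [(hall i hi).2] at hfv
      simp at hfv
end

section
/- For t = 3, the palindromic van der Waerden number satisfies vdw_pd(2;3,3)₂ = 9: there is a good palindromic partition of {1,…,8} for (3,3), and for all n ≥ 9 there is none. -/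
set_option maxHeartbeats 2000000 in
set_option maxRecDepth 10000 in
/-- w(2;3,3) = 9: every 2-coloring of 9 points has a monochromatic 3-AP. -/
lemma vdw9 : ∀ c : Fin 9 → Bool, ∃ a b e : Fin 9,
    a.1 < b.1 ∧ b.1 < e.1 ∧ a.1 + e.1 = 2 * b.1 ∧ c a = c b ∧ c b = c e := by decide

lemma mem_zero_of_not_one {n : ℕ} {P : Fin 2 → Set ℕ}
    (hu : ∀ v ∈ Set.Icc 1 n, ∃! i, v ∈ P i) {v : ℕ} (hv : v ∈ Set.Icc 1 n)
    (h : v ∉ P 1) : v ∈ P 0 := by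
  obtain ⟨i, hi, -⟩ := hu v hv
  fin_cases i
  · exact hi
  · exact absurd hi h

theorem pd_vdw_3_3_eq_9 :
    GPPExists 2 ![3, 3] 8 ∧ ∀ n, 9 ≤ n → ¬ GPPExists 2 ![3, 3] n := by
  constructor
  · -- the partition {1,4,5,8} / {2,3,6,7}
    refine ⟨![({1, 4, 5, 8} : Set ℕ), ({2, 3, 6, 7} : Set ℕ)], ⟨?_, ?_, ?_⟩, ?_⟩
    · intro i v hv
      fin_cases i <;> simp only [Matrix.cons_val_zero, Matrix.cons_val_one,
        Matrix.head_cons] at hv <;> simp at hv <;> simp [Set.mem_Icc] <;> omega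
    · intro v hv
      simp only [Set.mem_Icc] at hv
      obtain ⟨h1, h2⟩ := hv
      interval_cases v
      · exact ⟨0, by simp, by intro j hj; fin_cases j <;> simp_all⟩
      · exact ⟨1, by simp, by intro j hj; fin_cases j <;> simp_all⟩
      · exact ⟨1, by simp, by intro j hj; fin_cases j <;> simp_all⟩
      · exact ⟨0, by simp, by intro j hj; fin_cases j <;> simp_all⟩
      · exact ⟨0, by simp, by intro j hj; fin_cases j <;> simp_all⟩
      · exact ⟨1, by simp, by intro j hj; fin_cases j <;> simp_all⟩
      · exact ⟨1, by simp, by intro j hj; fin_cases j <;> simp_all⟩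
      · exact ⟨0, by simp, by intro j hj; fin_cases j <;> simp_all⟩
    · intro i hi
      fin_cases i <;>
      · obtain ⟨a, d, ha, hd, hAP⟩ := hi
        have h0 := hAP 0 (by norm_num)
        have h1 := hAP 1 (by norm_num)
        have h2 := hAP 2 (by norm_num)
        simp at h0 h1 h2
        omega
    · intro i
      fin_cases i <;>
      · ext x
        simp [Set.image_insert_eq]
        omega
  · rintro n hn ⟨P, ⟨hsub, hu, hAP⟩, -⟩
    classical
    obtain ⟨a, b, e, hab, hbe, hsum, hc1, hc2⟩ :=
      vdw9 (fun v => decide ((v.1 + 1) ∈ P 1))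
    simp only [decide_eq_decide] at hc1 hc2
    have hmem : ∀ v : Fin 9, (v.1 + 1) ∈ Set.Icc 1 n := by
      intro v; simp only [Set.mem_Icc]; omega
    have build : ∀ j : Fin 2, (a.1 + 1) ∈ P j → (b.1 + 1) ∈ P j → (e.1 + 1) ∈ P j →
        False := by
      intro j ma mb me
      refine hAP j ⟨a.1 + 1, b.1 - a.1, by omega, by omega, ?_⟩
      have ht : (![3, 3] : Fin 2 → ℕ) j = 3 := by fin_cases j <;> rfl
      rw [ht]
      intro i hi
      interval_cases i
      · simpa using ma
      · have h : a.1 + 1 + 1 * (b.1 - a.1) = b.1 + 1 := by omega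
        rw [h]; exact mb
      · have h : a.1 + 1 + 2 * (b.1 - a.1) = e.1 + 1 := by omega
        rw [h]; exact me
    by_cases hA : (a.1 + 1) ∈ P 1
    · exact build 1 hA (hc1.mp hA) (hc2.mp (hc1.mp hA))
    · have hB : (b.1 + 1) ∉ P 1 := fun h => hA (hc1.mpr h)
      have hE : (e.1 + 1) ∉ P 1 := fun h => hB (hc2.mpr h)
      exact build 0 (mem_zero_of_not_one hu (hmem a) hA)
        (mem_zero_of_not_one hu (hmem b) hB)
        (mem_zero_of_not_one hu (hmem e) hE)
end
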